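/- For all n ≥ 0 and all rationals m, f_m^{(n+1)}(X) = (X - m)·f_m^{(n)}(X) + (m² + m + 1)·r^{(n)}(X) as polynomials in ℚ[X]. -/
import Mathlib


open Polynomial

/-- h(i) = 0, -1, -1, 0, 1, 1 according as i = 0,1,2,3,4,5 (mod 6). -/
def hcoef (i : ℕ) : ℤ :=
  match i % 6 with
  | 0 => 0 | 1 => -1 | 2 => -1 | 3 => 0 | 4 => 1 | _ => 1

/-- g(i) = 1, -m, -m-1, -1, m, m+1 according as i = 0,1,2,3,4,5 (mod 6). -/
def gcoef (m : ℚ) (i : ℕ) : ℚ :=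
  match i % 6 with
  | 0 => 1 | 1 => -m | 2 => -m - 1 | 3 => -1 | 4 => m | _ => m + 1

/-- f_m^{(n)}(X) = sum_{i=0}^n C(n,i) X^i g(n-i). -/
noncomputable def fpol (m : ℚ) (n : ℕ) : ℚ[X] :=
  ∑ i ∈ Finset.range (n + 1), C ((n.choose i : ℚ) * gcoef m (n - i)) * X ^ i

/-- r^{(n)}(X) = sum_{i=0}^n C(n,i) X^i h(n-i). -/
noncomputable def rpol (n : ℕ) : ℤ[X] :=
  ∑ i ∈ Finset.range (n + 1), C ((n.choose i : ℤ) * hcoef (n - i)) * X ^ i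

lemma gcoef_succ (m : ℚ) (j : ℕ) :
    gcoef m (j + 1) = -m * gcoef m j + (m ^ 2 + m + 1) * (hcoef j : ℚ) := by
  have h : (j + 1) % 6 = (j % 6 + 1) % 6 := by omega
  unfold gcoef hcoef
  rw [h]
  have h6 : j % 6 < 6 := Nat.mod_lt _ (by norm_num)
  interval_cases h' : j % 6 <;> push_cast <;> ring

lemma fpol_coeff (m : ℚ) (n k : ℕ) :
    (fpol m n).coeff k = (n.choose k : ℚ) * gcoef m (n - k) := by
  rw [fpol, Polynomial.finset_sum_coeff]
  simp only [Polynomial.coeff_C_mul, Polynomial.coeff_X_pow, mul_ite, mul_one, mul_zero]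
  rw [Finset.sum_ite_eq (Finset.range (n + 1)) k]
  by_cases hk : k ≤ n
  · simp [Finset.mem_range, Nat.lt_succ_of_le hk]
  · simp [Finset.mem_range, Nat.choose_eq_zero_of_lt (by omega : n < k), hk, Nat.lt_succ_iff]

lemma rpol_coeff (n k : ℕ) :
    (rpol n).coeff k = (n.choose k : ℤ) * hcoef (n - k) := by
  rw [rpol, Polynomial.finset_sum_coeff]
  simp only [Polynomial.coeff_C_mul, Polynomial.coeff_X_pow, mul_ite, mul_one, mul_zero]
  rw [Finset.sum_ite_eq (Finset.range (n + 1)) k]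
  by_cases hk : k ≤ n
  · simp [Finset.mem_range, Nat.lt_succ_of_le hk]
  · simp [Finset.mem_range, Nat.choose_eq_zero_of_lt (by omega : n < k), hk, Nat.lt_succ_iff]

theorem stmt0 (n : ℕ) (m : ℚ) :
    fpol m (n + 1) =
      (X - C m) * fpol m n +
        C (m ^ 2 + m + 1) * (rpol n).map (Int.castRingHom ℚ) := by
  ext k
  rw [fpol_coeff, sub_mul, Polynomial.coeff_add, Polynomial.coeff_sub,
    Polynomial.coeff_C_mul, Polynomial.coeff_C_mul, Polynomial.coeff_map,
    rpol_coeff, fpol_coeff]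
  cases k with
  | zero =>
      rw [Polynomial.mul_coeff_zero, Polynomial.coeff_X_zero, zero_mul]
      simp only [Nat.choose_zero_right, Nat.cast_one, one_mul, Nat.sub_zero,
        Int.coe_castRingHom]
      rw [gcoef_succ]
      ring
  | succ j =>
      rw [Polynomial.coeff_X_mul, fpol_coeff, Nat.choose_succ_succ, Nat.cast_add]
      simp only [Int.coe_castRingHom]
      by_cases hj : j + 1 ≤ n
      · have h1 : n - j = (n - (j + 1)) + 1 := by omega
        have h2 : n + 1 - (j + 1) = n - j := by omega
        rw [h2, h1, gcoef_succ]
        simp only [Nat.succ_eq_add_one]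
        push_cast
        ring
      · have : n.choose (j + 1) = 0 := Nat.choose_eq_zero_of_lt (by omega)
        rw [this]
        have h2 : n + 1 - (j + 1) = n - j := by omega
        rw [h2]
        push_cast
        ring
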